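/- Let B, C : [0,T] → ℝ be differentiable with B(0) = 0, C(0) = 1, 0 < C(t) ≤ 1, P'(C(t)) > 0, and suppose they satisfy the system B'(t) = k(k−1)·(C(t)−B(t))·P''(C(t))/P'(C(t))² and C'(t) = −k/P'(C(t)) for all t ∈ [0,T]. Then B(t) = Q(C(t))·P'(C(t))^{k−1} for all t ∈ [0,T]. -/

import Mathlib

open Finset

/-- The generating polynomial `P(x) = ∑_{i=1}^Δ ζ_i x^i` of the degree sequence. -/
noncomputable def Ppoly (Δ : ℕ) (ζ : ℕ → ℝ) (x : ℝ) : ℝ :=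
  ∑ i ∈ Finset.Icc 1 Δ, ζ i * x ^ i

/-- The derivative `P'(x) = ∑_{i=1}^Δ i ζ_i x^{i-1}`. -/
noncomputable def Pderiv (Δ : ℕ) (ζ : ℕ → ℝ) (x : ℝ) : ℝ :=
  ∑ i ∈ Finset.Icc 1 Δ, ζ i * i * x ^ (i - 1)

/-- The second derivative `P''(x) = ∑_{i=1}^Δ i(i-1) ζ_i x^{i-2}`. -/
noncomputable def Pderiv2 (Δ : ℕ) (ζ : ℕ → ℝ) (x : ℝ) : ℝ :=
  ∑ i ∈ Finset.Icc 1 Δ, ζ i * i * (i - 1) * x ^ (i - 2)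

/-- `Q(x) = ∫_x^1 (k-1) w P''(w) / P'(w)^k dw`. -/
noncomputable def Qfun (k Δ : ℕ) (ζ : ℕ → ℝ) (x : ℝ) : ℝ :=
  ∫ w in x..1, ((k : ℝ) - 1) * w * Pderiv2 Δ ζ w / (Pderiv Δ ζ w) ^ k

/-- `h(x) = x / P'(x)^{k-1} - Q(x)`. -/
noncomputable def hfun (k Δ : ℕ) (ζ : ℕ → ℝ) (x : ℝ) : ℝ :=
  x / (Pderiv Δ ζ x) ^ (k - 1) - Qfun k Δ ζ x

/-! Along the trajectory, `B / P'(C)^{k-1}` and `Q(C)` have the same derivative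
`k(k-1) C P''(C) / P'(C)^{k+1}`: for the first this is where the `-B` in the equation for `B'`
cancels, for the second it is the chain rule with `Q'(x) = -(k-1) x P''(x) / P'(x)^k`.
Both vanish at `t = 0`, since `B(0) = 0` and `Q(C(0)) = Q(1) = 0`, so they coincide. -/

theorem eqOn_Icc_of_hasDerivWithinAt_eq {f g f' : ℝ → ℝ} {a b : ℝ}
    (hf : ∀ t ∈ Set.Icc a b, HasDerivWithinAt f (f' t) (Set.Icc a b) t)
    (hg : ∀ t ∈ Set.Icc a b, HasDerivWithinAt g (f' t) (Set.Icc a b) t) (ha : f a = g a) :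
    Set.EqOn f g (Set.Icc a b) :=
  eq_of_has_deriv_right_eq
    (fun t ht => (hf t (Set.mem_Icc_of_Ico ht)).mono_of_mem_nhdsWithin (Icc_mem_nhdsGE_of_mem ht))
    (fun t ht => (hg t (Set.mem_Icc_of_Ico ht)).mono_of_mem_nhdsWithin (Icc_mem_nhdsGE_of_mem ht))
    (fun t ht => (hf t ht).continuousWithinAt) (fun t ht => (hg t ht).continuousWithinAt) ha

section Pderiv

variable {Δ : ℕ} {ζ : ℕ → ℝ}

theorem hasDerivAt_Pderiv (x : ℝ) : HasDerivAt (Pderiv Δ ζ) (Pderiv2 Δ ζ x) x := by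
  have h := HasDerivAt.fun_sum (u := Finset.Icc 1 Δ) fun i _ =>
    (hasDerivAt_pow (i - 1) x).const_mul (ζ i * i)
  refine h.congr_deriv (Finset.sum_congr rfl fun i hi => ?_)
  obtain ⟨j, rfl⟩ : ∃ j, i = j + 1 := ⟨i - 1, by grind⟩
  rcases j with _ | j
  · simp
  · simp only [Nat.add_sub_cancel, Nat.cast_add, Nat.cast_one, show j + 1 + 1 - 2 = j by omega]
    ring

theorem continuous_Pderiv : Continuous (Pderiv Δ ζ) :=
  continuous_iff_continuousAt.mpr fun x => (hasDerivAt_Pderiv x).continuousAt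

theorem continuous_Pderiv2 : Continuous (Pderiv2 Δ ζ) := by
  unfold Pderiv2
  fun_prop

theorem Pderiv_pos (hΔ : 1 ≤ Δ) (hζ : ∀ i ∈ Finset.Icc 1 Δ, 0 ≤ ζ i) (hζΔ : 0 < ζ Δ)
    {x : ℝ} (hx : 0 < x) : 0 < Pderiv Δ ζ x := by
  refine Finset.sum_pos' (fun i hi => by have := hζ i hi; positivity)
    ⟨Δ, Finset.mem_Icc.mpr ⟨hΔ, le_rfl⟩, ?_⟩
  have : (0 : ℝ) < Δ := by exact_mod_cast hΔ
  positivity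

theorem continuousOn_Qfun_integrand (k : ℕ) (hΔ : 1 ≤ Δ)
    (hζ : ∀ i ∈ Finset.Icc 1 Δ, 0 ≤ ζ i) (hζΔ : 0 < ζ Δ) :
    ContinuousOn (fun w => ((k : ℝ) - 1) * w * Pderiv2 Δ ζ w / (Pderiv Δ ζ w) ^ k)
      (Set.Ioi 0) :=
  ((continuous_const.mul continuous_id).mul continuous_Pderiv2).continuousOn.div
    (continuous_Pderiv.pow k).continuousOn
    fun _ hx => pow_ne_zero _ (Pderiv_pos hΔ hζ hζΔ hx).ne'

theorem hasDerivAt_Qfun (k : ℕ) (hΔ : 1 ≤ Δ)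
    (hζ : ∀ i ∈ Finset.Icc 1 Δ, 0 ≤ ζ i) (hζΔ : 0 < ζ Δ) {x : ℝ} (hx : 0 < x) :
    HasDerivAt (Qfun k Δ ζ) (-(((k : ℝ) - 1) * x * Pderiv2 Δ ζ x / (Pderiv Δ ζ x) ^ k)) x := by
  have hcont := continuousOn_Qfun_integrand k hΔ hζ hζΔ
  have hsub : Set.uIcc x 1 ⊆ Set.Ioi 0 := fun w hw =>
    (lt_inf_iff.mpr ⟨hx, one_pos⟩).trans_le hw.1
  exact intervalIntegral.integral_hasDerivAt_left ((hcont.mono hsub).intervalIntegrable)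
    (hcont.stronglyMeasurableAtFilter isOpen_Ioi x hx) (hcont.continuousAt (Ioi_mem_nhds hx))

end Pderiv

section Trajectory

variable {k Δ : ℕ} {ζ : ℕ → ℝ} {B C : ℝ → ℝ} {s : Set ℝ} {t : ℝ}

theorem hasDerivWithinAt_div_Pderiv_pow (hk : 1 ≤ k) (hP : 0 < Pderiv Δ ζ (C t))
    (hB : HasDerivWithinAt B
      ((k : ℝ) * ((k : ℝ) - 1) * (C t - B t) * Pderiv2 Δ ζ (C t) / (Pderiv Δ ζ (C t)) ^ 2) s t)
    (hC : HasDerivWithinAt C (-(k : ℝ) / Pderiv Δ ζ (C t)) s t) :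
    HasDerivWithinAt (fun u => B u / (Pderiv Δ ζ (C u)) ^ (k - 1))
      ((k : ℝ) * ((k : ℝ) - 1) * C t * Pderiv2 Δ ζ (C t) / (Pderiv Δ ζ (C t)) ^ (k + 1)) s t := by
  obtain ⟨m, rfl⟩ : ∃ m, k = m + 1 := ⟨k - 1, by omega⟩
  have hPC := (hasDerivAt_Pderiv (Δ := Δ) (ζ := ζ) (C t)).comp_hasDerivWithinAt t hC
  refine (hB.div (hPC.pow m) (pow_ne_zero _ hP.ne')).congr_deriv ?_
  rcases m with _ | m
  · simp
  · simp only [Nat.add_sub_cancel, Nat.cast_add, Nat.cast_one, Pi.pow_apply, Function.comp_apply]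
    field_simp
    ring

theorem hasDerivWithinAt_Qfun_comp (hΔ : 1 ≤ Δ) (hζ : ∀ i ∈ Finset.Icc 1 Δ, 0 ≤ ζ i)
    (hζΔ : 0 < ζ Δ) (hCt : 0 < C t) (hC : HasDerivWithinAt C (-(k : ℝ) / Pderiv Δ ζ (C t)) s t) :
    HasDerivWithinAt (fun u => Qfun k Δ ζ (C u))
      ((k : ℝ) * ((k : ℝ) - 1) * C t * Pderiv2 Δ ζ (C t) / (Pderiv Δ ζ (C t)) ^ (k + 1)) s t :=
  ((hasDerivAt_Qfun k hΔ hζ hζΔ hCt).comp_hasDerivWithinAt t hC).congr_deriv (by ring)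

end Trajectory

theorem B_eq_Q_of_C_general (k Δ : ℕ) (hk : 2 ≤ k) (hΔ : 2 ≤ Δ) (ζ : ℕ → ℝ)
    (hζ : ∀ i ∈ Finset.Icc 1 Δ, 0 ≤ ζ i) (hζΔ : 0 < ζ Δ)
    (T : ℝ) (B C : ℝ → ℝ) (hB0 : B 0 = 0) (hC0 : C 0 = 1)
    (hCpos : ∀ t ∈ Set.Icc (0 : ℝ) T, 0 < C t)
    (hodeB : ∀ t ∈ Set.Icc (0 : ℝ) T,
      HasDerivWithinAt B
        ((k : ℝ) * ((k : ℝ) - 1) * (C t - B t) * Pderiv2 Δ ζ (C t) / (Pderiv Δ ζ (C t)) ^ 2)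
        (Set.Icc 0 T) t)
    (hodeC : ∀ t ∈ Set.Icc (0 : ℝ) T,
      HasDerivWithinAt C (-(k : ℝ) / Pderiv Δ ζ (C t)) (Set.Icc 0 T) t) :
    ∀ t ∈ Set.Icc (0 : ℝ) T, B t = Qfun k Δ ζ (C t) * (Pderiv Δ ζ (C t)) ^ (k - 1) := by
  have hΔ₁ : 1 ≤ Δ := by omega
  have hP : ∀ t ∈ Set.Icc (0 : ℝ) T, 0 < Pderiv Δ ζ (C t) := fun t ht =>
    Pderiv_pos hΔ₁ hζ hζΔ (hCpos t ht)
  have hEq : Set.EqOn (fun u => B u / (Pderiv Δ ζ (C u)) ^ (k - 1)) (fun u => Qfun k Δ ζ (C u))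
      (Set.Icc 0 T) :=
    eqOn_Icc_of_hasDerivWithinAt_eq
      (fun t ht => hasDerivWithinAt_div_Pderiv_pow (by omega) (hP t ht) (hodeB t ht) (hodeC t ht))
      (fun t ht => hasDerivWithinAt_Qfun_comp hΔ₁ hζ hζΔ (hCpos t ht) (hodeC t ht))
      (by simp [hB0, hC0, Qfun])
  intro t ht
  exact (div_eq_iff (pow_pos (hP t ht) _).ne').mp (hEq ht)

/-- if `B(0) = 0`, `C(0) = 1`, `0 < C ≤ 1`, `P'(C) > 0`, and
`B' = k(k-1)(C-B)P''(C)/P'(C)²`, `C' = −k/P'(C)` on `[0,T]`, then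
`B(t) = Q(C(t))·P'(C(t))^{k-1}`. -/
theorem B_eq_Q_of_C (k Δ : ℕ) (hk : 2 ≤ k) (hΔ : 2 ≤ Δ) (ζ : ℕ → ℝ)
    (hζ : ∀ i ∈ Finset.Icc 1 Δ, 0 ≤ ζ i) (hζΔ : 0 < ζ Δ)
    (hsum : ∑ i ∈ Finset.Icc 1 Δ, ζ i = 1)
    (T : ℝ) (hT : 0 < T) (B C : ℝ → ℝ) (hB0 : B 0 = 0) (hC0 : C 0 = 1)
    (hCpos : ∀ t ∈ Set.Icc (0 : ℝ) T, 0 < C t)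
    (hCle : ∀ t ∈ Set.Icc (0 : ℝ) T, C t ≤ 1)
    (hPpos : ∀ t ∈ Set.Icc (0 : ℝ) T, 0 < Pderiv Δ ζ (C t))
    (hodeB : ∀ t ∈ Set.Icc (0 : ℝ) T,
      HasDerivWithinAt B
        ((k : ℝ) * ((k : ℝ) - 1) * (C t - B t) * Pderiv2 Δ ζ (C t) / (Pderiv Δ ζ (C t)) ^ 2)
        (Set.Icc 0 T) t)
    (hodeC : ∀ t ∈ Set.Icc (0 : ℝ) T,
      HasDerivWithinAt C (-(k : ℝ) / Pderiv Δ ζ (C t)) (Set.Icc 0 T) t) :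
    ∀ t ∈ Set.Icc (0 : ℝ) T, B t = Qfun k Δ ζ (C t) * (Pderiv Δ ζ (C t)) ^ (k - 1) :=
  B_eq_Q_of_C_general k Δ hk hΔ ζ hζ hζΔ T B C hB0 hC0 hCpos hodeB hodeC
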